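/- arXiv:math/0612441 — 4 statements merged into one kernel-verified Lean document; each statement's English description precedes it below -/
import Mathlib

section
/- Let a = 0 and b ≠ 0, and A₂ = k[x,y]/(y² - x³ - b) with derivation ∂₂ = -2y·∂/∂x - 3x²·∂/∂y. Then the cokernel of ∂₂ : A₂ → A₂ is a 2-dimensional k-vector space with basis given by the images of 1 and x. -/
open MvPolynomial

/-!
Writing `f = X³ + b`, the ring `A₂` is free over `k[x]` with basis `1, y`, and
`∂₂ (g(x)) = -2 g'(x) y`, `∂₂ (g(x) y) = -(2 f g' + f' g)(x)`. In characteristic zero every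
polynomial is a derivative, so the cokernel is `k[X] ⧸ {2 f g' + f' g}`. Since
`g (2 f g' + f' g) = (f g²)'`, the operator `g ↦ 2 f g' + f' g` raises degrees by exactly
`deg f - 1 = 2`, hence the polynomials of degree `< 2` are a complement of its image.
-/

namespace Polynomial

variable {k : Type*} [Field k]

theorem derivative_surjective [CharZero k] : Function.Surjective (derivative : k[X] → k[X]) := by
  intro h
  induction h using Polynomial.induction_on' with
  | add p q hp hq =>
    obtain ⟨P, rfl⟩ := hp
    obtain ⟨Q, rfl⟩ := hq
    exact ⟨P + Q, derivative_add⟩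
  | monomial n c =>
    refine ⟨monomial (n + 1) (c / (n + 1)), ?_⟩
    rw [derivative_monomial, Nat.cast_add_one, div_mul_cancel₀ _ (Nat.cast_add_one_ne_zero n),
      Nat.add_sub_cancel]

noncomputable def oddDerivative (f : k[X]) : k[X] →ₗ[k] k[X] :=
  2 • (LinearMap.mulLeft k f ∘ₗ derivative) + LinearMap.mulLeft k (derivative f)

theorem oddDerivative_apply (f g : k[X]) :
    oddDerivative f g = 2 * f * derivative g + derivative f * g := by
  simp [oddDerivative, two_mul, add_mul]

theorem mul_oddDerivative (f g : k[X]) :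
    g * oddDerivative f g = derivative (f * g ^ 2) := by
  rw [oddDerivative_apply, derivative_mul, sq, derivative_mul]
  ring

theorem natDegree_mul_sq {f g : k[X]} (hf : f ≠ 0) (hg : g ≠ 0) :
    (f * g ^ 2).natDegree = f.natDegree + 2 * g.natDegree := by
  rw [natDegree_mul hf (pow_ne_zero 2 hg), natDegree_pow, mul_comm 2]

theorem oddDerivative_ne_zero [CharZero k] {f g : k[X]} (hf : f.natDegree ≠ 0) (hg : g ≠ 0) :
    oddDerivative f g ≠ 0 := by
  have hf0 : f ≠ 0 := ne_zero_of_natDegree_gt (Nat.pos_of_ne_zero hf)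
  refine right_ne_zero_of_mul (a := g) ?_
  rw [mul_oddDerivative, Ne, derivative_eq_zero, natDegree_mul_sq hf0 hg]
  omega

theorem natDegree_oddDerivative [CharZero k] {f g : k[X]} {n : ℕ} (hf : f.natDegree = n + 1)
    (hg : g ≠ 0) : (oddDerivative f g).natDegree = n + g.natDegree := by
  have hf0 : f ≠ 0 := ne_zero_of_natDegree_gt (n := 0) (by omega)
  have hdeg := congrArg natDegree (mul_oddDerivative f g)
  rw [natDegree_mul hg (oddDerivative_ne_zero (by omega) hg), natDegree_derivative,
    natDegree_mul_sq hf0 hg, hf] at hdeg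
  omega

theorem codisjoint_degreeLT_of_exists_degree_eq {W : Submodule k k[X]} {N : ℕ}
    (hW : ∀ n ≥ N, ∃ w ∈ W, w.degree = n) : Codisjoint (degreeLT k N) W := by
  suffices h : ∀ m, degreeLT k m ≤ degreeLT k N ⊔ W by
    rw [codisjoint_iff_le_sup]
    intro p _
    exact h (p.natDegree + 1) <|
      mem_degreeLT.2 (degree_le_natDegree.trans_lt (by exact_mod_cast Nat.lt_succ_self _))
  intro m
  induction m with
  | zero => exact le_sup_of_le_left (degreeLT_mono (Nat.zero_le N))
  | succ m ih =>
    rcases lt_or_ge m N with hm | hm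
    · exact le_sup_of_le_left (degreeLT_mono hm)
    obtain ⟨w, hwW, hw⟩ := hW m hm
    have hw0 : w ≠ 0 := by rintro rfl; simp at hw
    have hwm : w.natDegree = m := natDegree_eq_of_degree_eq_some hw
    intro p hp
    set c := p.coeff m / w.leadingCoeff
    have hlow : p - c • w ∈ degreeLT k m := by
      rw [mem_degreeLT, degree_lt_iff_coeff_zero]
      intro j hj
      rcases hj.eq_or_lt with rfl | hj
      · simp [c, ← hwm, leadingCoeff_ne_zero.2 hw0]
      · have hpj : p.coeff j = 0 := coeff_eq_zero_of_degree_lt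
          ((mem_degreeLT.1 hp).trans_le (by exact_mod_cast hj))
        simp [hpj, coeff_eq_zero_of_natDegree_lt (hwm ▸ hj)]
    simpa using add_mem (ih hlow) (le_sup_right (a := degreeLT k N) (Submodule.smul_mem W c hwW))

theorem isCompl_degreeLT_range_oddDerivative [CharZero k] {f : k[X]} {n : ℕ}
    (hf : f.natDegree = n + 1) : IsCompl (degreeLT k n) (LinearMap.range (oddDerivative f)) := by
  constructor
  · rw [Submodule.disjoint_def]
    rintro p hp ⟨g, rfl⟩
    by_contra hL
    have hg : g ≠ 0 := by rintro rfl; simp at hL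
    rw [mem_degreeLT, degree_eq_natDegree hL, natDegree_oddDerivative hf hg, Nat.cast_lt] at hp
    omega
  · refine codisjoint_degreeLT_of_exists_degree_eq fun m hm =>
      ⟨oddDerivative f (X ^ (m - n)), ⟨_, rfl⟩, ?_⟩
    have hX : (X ^ (m - n) : k[X]) ≠ 0 := pow_ne_zero _ X_ne_zero
    rw [degree_eq_natDegree (oddDerivative_ne_zero (by omega) hX), natDegree_oddDerivative hf hX,
      natDegree_X_pow]
    congr 1
    omega

end Polynomial

open scoped Polynomial

section Cokernel

open Polynomial

variable {k A : Type*} [Field k] [CommRing A] [Algebra k A] {f : k[X]} {u v : A}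
  {D : Derivation k A A}

theorem Derivation.map_aeval_of_map_eq (hDu : D u = -2 * v) (g : k[X]) :
    D (aeval u g) = -2 * aeval u (derivative g) * v := by
  rw [Derivation.map_aeval, hDu, smul_eq_mul]
  ring

theorem Derivation.map_aeval_mul_of_map_eq (hv : v * v = aeval u f) (hDu : D u = -2 * v)
    (hDv : D v = -aeval u (derivative f)) (g : k[X]) :
    D (aeval u g * v) = -aeval u (oddDerivative f g) := by
  rw [Derivation.leibniz, Derivation.map_aeval_of_map_eq hDu, hDv, oddDerivative_apply,
    smul_eq_mul, smul_eq_mul]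
  simp only [map_add, map_mul, map_ofNat]
  linear_combination (-2 * aeval u (derivative g)) * hv

theorem aeval_oddDerivative_mem_range (hv : v * v = aeval u f) (hDu : D u = -2 * v)
    (hDv : D v = -aeval u (derivative f)) (g : k[X]) :
    aeval u (oddDerivative f g) ∈ LinearMap.range D.toLinearMap :=
  ⟨-(aeval u g * v), by simp [D.map_aeval_mul_of_map_eq hv hDu hDv]⟩

theorem aeval_mul_mem_range [CharZero k] (hDu : D u = -2 * v) (h : k[X]) :
    aeval u h * v ∈ LinearMap.range D.toLinearMap := by
  obtain ⟨G, rfl⟩ := derivative_surjective h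
  refine ⟨(-2 : k)⁻¹ • aeval u G, ?_⟩
  rw [LinearMap.map_smul]
  change (-2 : k)⁻¹ • D (aeval u G) = _
  rw [D.map_aeval_of_map_eq hDu, mul_assoc, Algebra.smul_def, ← mul_assoc,
    ← map_ofNat (algebraMap k A) 2, ← map_neg, ← map_mul, inv_mul_cancel₀ (by norm_num), map_one,
    one_mul]

theorem mem_range_oddDerivative_of_aeval_mem_range (hv : v * v = aeval u f)
    (hDu : D u = -2 * v) (hDv : D v = -aeval u (derivative f))
    (hspan : ∀ a : A, ∃ g h : k[X], aeval u g + aeval u h * v = a)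
    (hfree : ∀ g h : k[X], aeval u g + aeval u h * v = 0 → g = 0 ∧ h = 0) {g : k[X]}
    (hg : aeval u g ∈ LinearMap.range D.toLinearMap) : g ∈ LinearMap.range (oddDerivative f) := by
  obtain ⟨a, ha⟩ := hg
  obtain ⟨G, H, rfl⟩ := hspan a
  have hzero : aeval u (g + oddDerivative f H) + aeval u (2 * derivative G) * v = 0 := by
    change D (aeval u G + aeval u H * v) = aeval u g at ha
    rw [map_add, D.map_aeval_of_map_eq hDu, D.map_aeval_mul_of_map_eq hv hDu hDv] at ha
    simp only [map_add, map_mul, map_ofNat]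
    linear_combination -ha
  refine ⟨-H, ?_⟩
  rw [map_neg, neg_eq_iff_add_eq_zero, add_comm]
  exact (hfree _ _ hzero).1

noncomputable def cokernelEquiv [CharZero k] (hv : v * v = aeval u f) (hDu : D u = -2 * v)
    (hDv : D v = -aeval u (derivative f))
    (hspan : ∀ a : A, ∃ g h : k[X], aeval u g + aeval u h * v = a)
    (hfree : ∀ g h : k[X], aeval u g + aeval u h * v = 0 → g = 0 ∧ h = 0) :
    (k[X] ⧸ LinearMap.range (oddDerivative f)) ≃ₗ[k] A ⧸ LinearMap.range D.toLinearMap :=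
  .ofBijective ((LinearMap.range (oddDerivative f)).liftQ
      ((LinearMap.range D.toLinearMap).mkQ ∘ₗ (Polynomial.aeval u).toLinearMap) <| by
        rintro _ ⟨g, rfl⟩
        simpa using aeval_oddDerivative_mem_range hv hDu hDv g)
    ⟨by
      rw [← LinearMap.ker_eq_bot, Submodule.ker_liftQ_eq_bot]
      intro g hg
      refine mem_range_oddDerivative_of_aeval_mem_range hv hDu hDv hspan hfree ?_
      simpa [Submodule.Quotient.mk_eq_zero] using hg,
    by
      intro a
      obtain ⟨a, rfl⟩ := Submodule.Quotient.mk_surjective _ a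
      obtain ⟨g, h, rfl⟩ := hspan a
      refine ⟨Submodule.Quotient.mk g, ?_⟩
      simpa [Submodule.Quotient.eq] using aeval_mul_mem_range hDu h⟩

theorem cokernelEquiv_mk [CharZero k] (hv : v * v = aeval u f) (hDu : D u = -2 * v)
    (hDv : D v = -aeval u (derivative f))
    (hspan : ∀ a : A, ∃ g h : k[X], aeval u g + aeval u h * v = a)
    (hfree : ∀ g h : k[X], aeval u g + aeval u h * v = 0 → g = 0 ∧ h = 0) (g : k[X]) :
    cokernelEquiv hv hDu hDv hspan hfree (Submodule.Quotient.mk g) =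
      Submodule.Quotient.mk (aeval u g) :=
  rfl

end Cokernel

section Presentation

variable {k A : Type*} [Field k] [CommRing A] [Algebra k A] {f : k[X]}
  {π : MvPolynomial (Fin 2) k →ₐ[k] A}

theorem map_X_one_mul_self
    (hker : RingHom.ker π.toRingHom = Ideal.span {X 1 ^ 2 - Polynomial.aeval (X 0) f}) :
    π (X 1) * π (X 1) = Polynomial.aeval (π (X 0)) f := by
  have hrel : X 1 ^ 2 - Polynomial.aeval (X 0) f ∈ RingHom.ker π.toRingHom :=
    hker ▸ Ideal.subset_span rfl
  rw [RingHom.mem_ker] at hrel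
  simpa [sub_eq_zero, sq, Polynomial.aeval_algHom_apply] using hrel

theorem exists_aeval_add_aeval_mul_eq (hπ : Function.Surjective π)
    (hv : π (X 1) * π (X 1) = Polynomial.aeval (π (X 0)) f) (a : A) :
    ∃ g h : k[X], Polynomial.aeval (π (X 0)) g + Polynomial.aeval (π (X 0)) h * π (X 1) = a := by
  obtain ⟨p, rfl⟩ := hπ a
  induction p using MvPolynomial.induction_on with
  | C c => exact ⟨Polynomial.C c, 0, by simp⟩
  | add p q hp hq =>
    obtain ⟨g₁, h₁, hp⟩ := hp
    obtain ⟨g₂, h₂, hq⟩ := hq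
    exact ⟨g₁ + g₂, h₁ + h₂, by rw [map_add π, ← hp, ← hq, map_add, map_add]; ring⟩
  | mul_X p i hp =>
    obtain ⟨g, h, hp⟩ := hp
    rw [map_mul, ← hp]
    fin_cases i
    · refine ⟨g * Polynomial.X, h * Polynomial.X, ?_⟩
      simp only [Fin.zero_eta, map_mul, Polynomial.aeval_X]
      ring
    · refine ⟨h * f, g, ?_⟩
      simp only [Fin.mk_one, map_mul, ← hv]
      ring

theorem eq_zero_of_aeval_add_aeval_mul_eq_zero
    (hker : RingHom.ker π.toRingHom = Ideal.span {X 1 ^ 2 - Polynomial.aeval (X 0) f})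
    {g h : k[X]}
    (hgh : Polynomial.aeval (π (X 0)) g + Polynomial.aeval (π (X 0)) h * π (X 1) = 0) :
    g = 0 ∧ h = 0 := by
  -- In `k[x][y]` the relation is monic of degree 2 in `y`, so it divides no nonzero `g + h y`.
  let ψ : MvPolynomial (Fin 2) k →ₐ[k] k[X][X] := aeval ![Polynomial.C Polynomial.X, Polynomial.X]
  have hψ (q : k[X]) : ψ (Polynomial.aeval (X 0) q) = Polynomial.C q := by
    rw [← Polynomial.aeval_algHom_apply]
    induction q using Polynomial.induction_on <;> simp_all [ψ]
  have hmem : Polynomial.aeval (X 0) g + Polynomial.aeval (X 0) h * X 1 ∈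
      RingHom.ker π.toRingHom := by
    simpa [Polynomial.aeval_algHom_apply] using hgh
  rw [hker, Ideal.mem_span_singleton] at hmem
  have hdvd := map_dvd ψ hmem
  simp only [map_sub, map_add, map_mul, map_pow, hψ, ψ, aeval_X, Matrix.cons_val_one,
    Matrix.cons_val_zero] at hdvd
  have hlin := Polynomial.eq_zero_of_dvd_of_degree_lt hdvd <| by
    rw [Polynomial.degree_X_pow_sub_C two_pos, add_comm]
    exact Polynomial.degree_linear_le.trans_lt (by norm_num)
  constructor
  · simpa using congrArg (Polynomial.coeff · 0) hlin
  · simpa using congrArg (Polynomial.coeff · 1) hlin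

end Presentation

theorem coker_del2_a_zero_general (k : Type*) [Field k] [CharZero k] (b : k)
    (A₂ : Type*) [CommRing A₂] [Algebra k A₂]
    (π : MvPolynomial (Fin 2) k →ₐ[k] A₂)
    (hπ : Function.Surjective π)
    (hker : RingHom.ker π.toRingHom =
      Ideal.span {(X 1 ^ 2 - X 0 ^ 3 - C b : MvPolynomial (Fin 2) k)})
    (D : Derivation k A₂ A₂)
    (hx : D (π (X 0)) = π (-2 * X 1))
    (hy : D (π (X 1)) = π (-(3 * X 0 ^ 2))) :
    ∃ bas : Module.Basis (Fin 2) k (A₂ ⧸ LinearMap.range D.toLinearMap),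
      bas 0 = Submodule.Quotient.mk (π 1) ∧
      bas 1 = Submodule.Quotient.mk (π (X 0)) := by
  set f : k[X] := Polynomial.X ^ 3 + Polynomial.C b
  have hf : f.natDegree = 2 + 1 := Polynomial.natDegree_X_pow_add_C
  have hker' : RingHom.ker π.toRingHom = Ideal.span {X 1 ^ 2 - Polynomial.aeval (X 0) f} := by
    rw [hker]
    simp [f, sub_sub]
  have hv := map_X_one_mul_self hker'
  have hDu : D (π (X 0)) = -2 * π (X 1) := by simp [hx, map_ofNat π 2]
  have hDv : D (π (X 1)) = -Polynomial.aeval (π (X 0)) (Polynomial.derivative f) := by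
    simp [hy, f, map_ofNat π 3, map_ofNat (algebraMap k A₂) 2]
    norm_num
  let e := cokernelEquiv hv hDu hDv (exists_aeval_add_aeval_mul_eq hπ hv)
    fun _ _ => eq_zero_of_aeval_add_aeval_mul_eq_zero hker'
  refine ⟨((Polynomial.degreeLT.basis k 2).map (Submodule.quotientEquivOfIsCompl _ _
    (Polynomial.isCompl_degreeLT_range_oddDerivative hf).symm).symm).map e, ?_, ?_⟩ <;>
    simp [e, cokernelEquiv_mk]

/-- For `a = 0`, `b ≠ 0`, `A₂ = k[x,y]/(y² - x³ - b)` with the derivation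
`∂₂` given by `∂₂(x) = -2y`, `∂₂(y) = -3x²`, the cokernel of `∂₂ : A₂ → A₂` is a
2-dimensional `k`-vector space with basis the images of `1` and `x`. -/
theorem coker_del2_a_zero (k : Type*) [Field k] [IsAlgClosed k] [CharZero k] (b : k)
    (hb : b ≠ 0)
    (A₂ : Type*) [CommRing A₂] [Algebra k A₂]
    (π : MvPolynomial (Fin 2) k →ₐ[k] A₂)
    (hπ : Function.Surjective π)
    (hker : RingHom.ker π.toRingHom =
      Ideal.span {(X 1 ^ 2 - X 0 ^ 3 - C b : MvPolynomial (Fin 2) k)})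
    (D : Derivation k A₂ A₂)
    (hx : D (π (X 0)) = π (-2 * X 1))
    (hy : D (π (X 1)) = π (-(3 * X 0 ^ 2))) :
    ∃ bas : Module.Basis (Fin 2) k (A₂ ⧸ LinearMap.range D.toLinearMap),
      bas 0 = Submodule.Quotient.mk (π 1) ∧
      bas 1 = Submodule.Quotient.mk (π (X 0)) :=
  coker_del2_a_zero_general k b A₂ π hπ hker D hx hy
end

section
/- Let A₃ = k[x,y,y⁻¹]/(y² - x³ - ax - b) with a ≠ 0 and Δ = 4a³ + 27b² ≠ 0, and let ∂₃ be the derivation with ∂₃(x) = -2y, ∂₃(y) = -(3x² + a). Then 15·y² ≡ Δ·y⁻² modulo the image of ∂₃, i.e., 15y² - Δy⁻² ∈ ∂₃(A₃). -/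
open MvPolynomial

/-!
Write `f = x³ + a x + b`, so that `y² = f(x)` and `∂ y = -f'(x)`. The discriminant is a
combination of `f` and `f'`: `Δ = g f' - h f` with `g = 6a x² - 9b x + 4a²`, `h = 18a x - 27b`.
Since `∂ y⁻¹ = f' y⁻²` and `f y⁻² = 1`, this gives `∂(g y⁻¹) = Δ y⁻² - 6a x - 9b`, while
`∂(-3 x y) = 15 y² - 6a x - 9b` by the curve equation; the difference is the claim.
-/

theorem cubic_discriminant_eq_bezout {A : Type*} [CommRing A] (a b x : A) :
    4 * a ^ 3 + 27 * b ^ 2 =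
      (6 * a * x ^ 2 - 9 * b * x + 4 * a ^ 2) * (3 * x ^ 2 + a) -
        (18 * a * x - 27 * b) * (x ^ 3 + a * x + b) := by
  ring

namespace Derivation

@[simp]
theorem map_ofNat {R A M : Type*} [CommSemiring R] [CommSemiring A] [Algebra R A]
    [AddCommMonoid M] [Module A M] [Module R M] (D : Derivation R A M) (n : ℕ) [n.AtLeastTwo] :
    D (ofNat(n) : A) = 0 :=
  D.map_natCast n

variable {R A : Type*} [CommRing R] [CommRing A] [Algebra R A] (D : Derivation R A A)
  {a b x y z : A}

theorem map_eq_fifteen_sq_sub_disc_mul_inv_sq (ha : D a = 0) (hb : D b = 0) (hyz : y * z = 1)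
    (hcurve : y ^ 2 = x ^ 3 + a * x + b) (hx : D x = -2 * y) (hy : D y = -(3 * x ^ 2 + a)) :
    D (-3 * x * y - (6 * a * x ^ 2 - 9 * b * x + 4 * a ^ 2) * z) =
      15 * y ^ 2 - (4 * a ^ 3 + 27 * b ^ 2) * z ^ 2 := by
  have hz : D z = (3 * x ^ 2 + a) * z ^ 2 := by
    rw [D.leibniz_of_mul_eq_one (mul_comm y z ▸ hyz), hy, smul_eq_mul]
    ring
  have hcurve_z : (x ^ 3 + a * x + b) * z ^ 2 = 1 := by
    rw [← hcurve, ← mul_pow, hyz, one_pow]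
  have hxy : D (-3 * x * y) = 15 * y ^ 2 - 6 * a * x - 9 * b := by
    simp only [leibniz, map_neg, map_ofNat, hx, hy, smul_eq_mul]
    linear_combination (-9) * hcurve
  have hg : D (6 * a * x ^ 2 - 9 * b * x + 4 * a ^ 2) = -2 * y * (12 * a * x - 9 * b) := by
    simp only [map_add, map_sub, leibniz, leibniz_pow, map_ofNat, ha, hb, hx, smul_eq_mul,
      nsmul_eq_mul]
    ring
  have hgz : D ((6 * a * x ^ 2 - 9 * b * x + 4 * a ^ 2) * z) =
      (4 * a ^ 3 + 27 * b ^ 2) * z ^ 2 - 6 * a * x - 9 * b := by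
    rw [leibniz, hg, hz, smul_eq_mul, smul_eq_mul]
    linear_combination (-z ^ 2) * cubic_discriminant_eq_bezout a b x +
      (18 * a * x - 27 * b) * hcurve_z - 2 * (12 * a * x - 9 * b) * hyz
  rw [map_sub, hxy, hgz]
  ring

end Derivation

theorem fifteen_ysq_eq_disc_yinvsq_mod_image_general (k : Type*) [Field k] (a b : k)
    (A₂ : Type*) [CommRing A₂] [Algebra k A₂]
    (π : MvPolynomial (Fin 2) k →ₐ[k] A₂)
    (hker : RingHom.ker π.toRingHom =
      Ideal.span {(X 1 ^ 2 - X 0 ^ 3 - C a * X 0 - C b : MvPolynomial (Fin 2) k)})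
    (A₃ : Type*) [CommRing A₃] [Algebra k A₃] [Algebra A₂ A₃] [IsScalarTower k A₂ A₃]
    [IsLocalization.Away (π (X 1)) A₃]
    (D : Derivation k A₃ A₃)
    (hx : D (algebraMap A₂ A₃ (π (X 0))) = algebraMap A₂ A₃ (π (-2 * X 1)))
    (hy : D (algebraMap A₂ A₃ (π (X 1))) = algebraMap A₂ A₃ (π (-(3 * X 0 ^ 2 + C a)))) :
    15 * (algebraMap A₂ A₃ (π (X 1))) ^ 2 -
        algebraMap k A₃ (4 * a ^ 3 + 27 * b ^ 2) *
          (IsLocalization.Away.invSelf (S := A₃) (π (X 1))) ^ 2 ∈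
      Set.range ⇑D := by
  have hcurve_poly : π (X 1 ^ 2 - X 0 ^ 3 - C a * X 0 - C b) = 0 := by
    change _ ∈ RingHom.ker π.toRingHom
    exact hker ▸ Ideal.mem_span_singleton_self _
  have hcurve := congrArg (algebraMap A₂ A₃) hcurve_poly
  simp only [map_sub, map_neg, map_add, map_mul, map_pow, map_ofNat, map_zero, algHom_C,
    ← IsScalarTower.algebraMap_apply] at hcurve hx hy
  refine ⟨_, D.map_eq_fifteen_sq_sub_disc_mul_inv_sq (D.map_algebraMap a) (D.map_algebraMap b)
    (IsLocalization.Away.mul_invSelf _) (by linear_combination hcurve) hx hy |>.trans ?_⟩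
  simp only [map_add, map_mul, map_pow, map_ofNat]

/-- In `A₃ = k[x,y,y⁻¹]/(y² - x³ - ax - b)` (the localization at `y` of
`A₂ = k[x,y]/(y² - x³ - ax - b)`), with `a ≠ 0`, `Δ = 4a³ + 27b² ≠ 0` and the derivation
`∂₃` with `∂₃(x) = -2y`, `∂₃(y) = -(3x² + a)`, one has `15·y² ≡ Δ·y⁻²` modulo the image
of `∂₃`, i.e. `15y² - Δy⁻² ∈ ∂₃(A₃)`. -/
theorem fifteen_ysq_eq_disc_yinvsq_mod_image (k : Type*) [Field k] [CharZero k] (a b : k)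
    (ha : a ≠ 0) (hΔ : 4 * a ^ 3 + 27 * b ^ 2 ≠ 0)
    (A₂ : Type*) [CommRing A₂] [Algebra k A₂]
    (π : MvPolynomial (Fin 2) k →ₐ[k] A₂)
    (hπ : Function.Surjective π)
    (hker : RingHom.ker π.toRingHom =
      Ideal.span {(X 1 ^ 2 - X 0 ^ 3 - C a * X 0 - C b : MvPolynomial (Fin 2) k)})
    (A₃ : Type*) [CommRing A₃] [Algebra k A₃] [Algebra A₂ A₃] [IsScalarTower k A₂ A₃]
    [IsLocalization.Away (π (X 1)) A₃]
    (D : Derivation k A₃ A₃)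
    (hx : D (algebraMap A₂ A₃ (π (X 0))) = algebraMap A₂ A₃ (π (-2 * X 1)))
    (hy : D (algebraMap A₂ A₃ (π (X 1))) = algebraMap A₂ A₃ (π (-(3 * X 0 ^ 2 + C a)))) :
    15 * (algebraMap A₂ A₃ (π (X 1))) ^ 2 -
        algebraMap k A₃ (4 * a ^ 3 + 27 * b ^ 2) *
          (IsLocalization.Away.invSelf (S := A₃) (π (X 1))) ^ 2 ∈
      Set.range ⇑D :=
  fifteen_ysq_eq_disc_yinvsq_mod_image_general k a b A₂ π hker A₃ D hx hy
end

section
/- Let a = 0, b ≠ 0, and A₃ = k[x,y,y⁻¹]/(y² - x³ - b) with derivation ∂₃ given by ∂₃(x) = -2y, ∂₃(y) = -3x². Then -3b·xy⁻² ≡ x modulo the image of ∂₃, i.e., x + 3b·xy⁻² ∈ ∂₃(A₃). -/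
open MvPolynomial

/-- In `A₃ = k[x,y,y⁻¹]/(y² - x³ - b)` (the localization at `y` of
`A₂ = k[x,y]/(y² - x³ - b)`), with `b ≠ 0` and the derivation `∂₃` given by
`∂₃(x) = -2y`, `∂₃(y) = -3x²`, one has `-3b·xy⁻² ≡ x` modulo the image of `∂₃`,
i.e. `x + 3b·xy⁻² ∈ ∂₃(A₃)`. -/
theorem x_plus_3b_x_yinvsq_mem_image (k : Type*) [Field k] [CharZero k] (b : k)
    (hb : b ≠ 0)
    (A₂ : Type*) [CommRing A₂] [Algebra k A₂]
    (π : MvPolynomial (Fin 2) k →ₐ[k] A₂)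
    (hπ : Function.Surjective π)
    (hker : RingHom.ker π.toRingHom =
      Ideal.span {(X 1 ^ 2 - X 0 ^ 3 - C b : MvPolynomial (Fin 2) k)})
    (A₃ : Type*) [CommRing A₃] [Algebra k A₃] [Algebra A₂ A₃] [IsScalarTower k A₂ A₃]
    [IsLocalization.Away (π (X 1)) A₃]
    (D : Derivation k A₃ A₃)
    (hx : D (algebraMap A₂ A₃ (π (X 0))) = algebraMap A₂ A₃ (π (-2 * X 1)))
    (hy : D (algebraMap A₂ A₃ (π (X 1))) = algebraMap A₂ A₃ (π (-(3 * X 0 ^ 2)))) :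
    algebraMap A₂ A₃ (π (X 0)) +
        algebraMap k A₃ (3 * b) * (algebraMap A₂ A₃ (π (X 0)) *
          (IsLocalization.Away.invSelf (S := A₃) (π (X 1))) ^ 2) ∈
      Set.range ⇑D := by
  set x : A₃ := algebraMap A₂ A₃ (π (X 0)) with hxdef
  set y : A₃ := algebraMap A₂ A₃ (π (X 1)) with hydef
  set t : A₃ := IsLocalization.Away.invSelf (S := A₃) (π (X 1)) with htdef
  have hyt : y * t = 1 := IsLocalization.Away.mul_invSelf (π (X 1))
  have hrel : y ^ 2 = x ^ 3 + algebraMap k A₃ b := by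
    have hmem : (X 1 ^ 2 - X 0 ^ 3 - C b : MvPolynomial (Fin 2) k) ∈
        RingHom.ker π.toRingHom := by
      rw [hker]; exact Ideal.subset_span rfl
    have h0 : π (X 1 ^ 2 - X 0 ^ 3 - C b) = 0 := hmem
    have := congrArg (algebraMap A₂ A₃) h0
    simp only [map_sub, map_pow, map_zero] at this
    have hc : algebraMap A₂ A₃ (π (C b)) = algebraMap k A₃ b := by
      rw [← MvPolynomial.algebraMap_eq, π.commutes, ← IsScalarTower.algebraMap_apply]
    rw [hc] at this
    rw [hxdef, hydef]
    linear_combination this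
  have hDx : D x = -2 * y := by
    rw [hxdef, hx]
    simp only [map_mul, map_neg, map_ofNat, hydef]
    try ring
  have hDy : D y = -(3 * x ^ 2) := by
    rw [hydef, hy]
    simp only [map_neg, map_mul, map_pow, map_ofNat, hxdef]
    try ring
  have hDt : D t = 3 * x ^ 2 * t ^ 2 := by
    have h0 : D (y * t) = 0 := by rw [hyt]; exact Derivation.map_one_eq_zero D
    rw [Derivation.leibniz, smul_eq_mul, smul_eq_mul] at h0
    have h1 : y * D t = 3 * x ^ 2 * t := by
      linear_combination h0 - t * hDy
    calc D t = (y * t) * D t := by rw [hyt]; ring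
    _ = t * (y * D t) := by ring
    _ = 3 * x ^ 2 * t ^ 2 := by rw [h1]; ring
  refine ⟨-(x ^ 2 * t), ?_⟩
  have h3b : algebraMap k A₃ (3 * b) = 3 * algebraMap k A₃ b := by
    rw [map_mul, map_ofNat]
  rw [map_neg, Derivation.leibniz, Derivation.leibniz_pow, h3b]
  simp only [smul_eq_mul, nsmul_eq_mul, hDx, hDt, Nat.cast_ofNat, pow_one]
  linear_combination (3 * x * t ^ 2) * hrel + (4 * x - 3 * x * (y * t + 1)) * hyt
end

section
/- Let A = k[x,y]/(y² - x³ - ax - b) with 4a³ + 27b² ≠ 0, char k = 0. The module of k-derivations Der_k(A) is free of rank 1 over A, generated by ∂ = -2y·∂/∂x - (3x²+a)·∂/∂y. -/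
open MvPolynomial

/-!
The partial derivatives `3x² + a` and `2y` of the Weierstrass equation generate the unit ideal
of `A`: the discriminant `4a³ + 27b²` is a combination of `3x² + a` and `x³ + ax + b = y²`, and
`2` is invertible. Differentiating the equation shows that any derivation `D` satisfies
`2y · D y = (3x² + a) · D x`, so a Bézout combination of `D x` and `D y` is a coefficient `m` with
`D = m ∂` on the generators `x, y`; the same identity makes `m ↦ m ∂` injective.
-/

theorem isCoprime_partials_of_sq_eq_cubic {A : Type*} [CommRing A] {x y a b : A}
    (h : y ^ 2 = x ^ 3 + a * x + b) (h2 : IsUnit (2 : A))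
    (hΔ : IsUnit (4 * a ^ 3 + 27 * b ^ 2)) :
    IsCoprime (3 * x ^ 2 + a) (2 * y) := by
  obtain ⟨i, hi⟩ := hΔ.exists_left_inv
  obtain ⟨j, hj⟩ := h2.exists_left_inv
  -- `(9x⁴ + 15ax² + 4a²)(3x² + a) - 27(x³ + ax - b)(x³ + ax + b) = 4a³ + 27b²`
  refine ⟨i * (9 * x ^ 4 + 15 * a * x ^ 2 + 4 * a ^ 2),
    -(27 * i * j * (x ^ 3 + a * x - b) * y), ?_⟩
  linear_combination (-54 * i * j * (x ^ 3 + a * x - b)) * h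
    - 27 * i * (x ^ 3 + a * x - b) * (x ^ 3 + a * x + b) * hj + hi

theorem Algebra.adjoin_range_comp_X_eq_top {R A σ : Type*} [CommSemiring R] [CommSemiring A]
    [Algebra R A] {π : MvPolynomial σ R →ₐ[R] A} (hπ : Function.Surjective π) :
    Algebra.adjoin R (Set.range (π ∘ X)) = ⊤ := by
  rw [Algebra.adjoin_range_eq_range_aeval, ← MvPolynomial.aeval_unique, AlgHom.range_eq_top]
  exact hπ

namespace Derivation

variable {k A : Type*} [CommRing k] [CommRing A] [Algebra k A]

theorem two_mul_smul_eq_of_sq_eq_cubic {M : Type*} [AddCommGroup M] [Module A M] [Module k M]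
    [IsScalarTower k A M] (D : Derivation k A M) {x y : A} {a b : k}
    (h : y ^ 2 = x ^ 3 + algebraMap k A a * x + algebraMap k A b) :
    (2 * y) • D y = (3 * x ^ 2 + algebraMap k A a) • D x := by
  have := congrArg D h
  simp only [leibniz_pow, map_add, leibniz, map_algebraMap, smul_zero, add_zero,
    ← Nat.cast_smul_eq_nsmul A, smul_smul] at this
  rw [add_smul]
  simpa using this

variable {x y f g : A} {d : Derivation k A A}

theorem exists_eq_smul_of_isCoprime (hgen : Algebra.adjoin k {x, y} = ⊤) (hfg : IsCoprime f g)
    (hdx : d x = -g) (hdy : d y = -f) (D : Derivation k A A) (hD : g • D y = f • D x) :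
    ∃ m : A, D = m • d := by
  obtain ⟨u, v, huv⟩ := hfg
  rw [smul_eq_mul, smul_eq_mul] at hD
  refine ⟨-(u * D y + v * D x), ext_of_adjoin_eq_top _ hgen ?_⟩
  rintro z (rfl | rfl)
  · rw [smul_apply, smul_eq_mul, hdx]
    linear_combination -u * hD - D z * huv
  · rw [smul_apply, smul_eq_mul, hdy]
    linear_combination v * hD - D z * huv

theorem eq_zero_of_smul_eq_zero_of_isCoprime (hfg : IsCoprime f g) (hdx : d x = -g)
    (hdy : d y = -f) {m : A} (hm : m • d = 0) : m = 0 := by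
  obtain ⟨u, v, huv⟩ := hfg
  have hmg : m * g = 0 := by simpa [hdx] using congrArg (fun D : Derivation k A A => D x) hm
  have hmf : m * f = 0 := by simpa [hdy] using congrArg (fun D : Derivation k A A => D y) hm
  linear_combination -m * huv + u * hmf + v * hmg

end Derivation

theorem derivations_free_rank_one_general (k : Type*) [Field k] [CharZero k]
    (a b : k) (hΔ : 4 * a ^ 3 + 27 * b ^ 2 ≠ 0)
    (A : Type*) [CommRing A] [Algebra k A]
    (π : MvPolynomial (Fin 2) k →ₐ[k] A)
    (hπ : Function.Surjective π)
    (hker : RingHom.ker π.toRingHom =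
      Ideal.span {(X 1 ^ 2 - X 0 ^ 3 - C a * X 0 - C b : MvPolynomial (Fin 2) k)})
    (d : Derivation k A A)
    (hx : d (π (X 0)) = π (-2 * X 1))
    (hy : d (π (X 1)) = π (-(3 * X 0 ^ 2 + C a))) :
    (∀ D : Derivation k A A, ∃ m : A, D = m • d) ∧
    (∀ m : A, m • d = 0 → m = 0) := by
  set x : A := π (X 0)
  set y : A := π (X 1)
  have hrel : y ^ 2 = x ^ 3 + algebraMap k A a * x + algebraMap k A b := by
    have hF : _ ∈ RingHom.ker π.toRingHom := hker ▸ Ideal.mem_span_singleton_self _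
    simp only [RingHom.mem_ker, AlgHom.toRingHom_eq_coe, RingHom.coe_coe, map_sub, map_mul,
      map_pow, algHom_C] at hF
    linear_combination hF
  have hcop : IsCoprime (3 * x ^ 2 + algebraMap k A a) (2 * y) := by
    refine isCoprime_partials_of_sq_eq_cubic hrel ?_ ?_
    · simpa only [map_ofNat] using (IsUnit.mk0 (2 : k) two_ne_zero).map (algebraMap k A)
    · simpa only [map_add, map_mul, map_pow, map_ofNat] using
        (IsUnit.mk0 _ hΔ).map (algebraMap k A)
  have hgen : Algebra.adjoin k {x, y} = ⊤ := by
    rw [← Algebra.adjoin_range_comp_X_eq_top hπ]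
    congr 1
    ext
    simp [x, y, Fin.exists_fin_two, eq_comm]
  have hdx : d x = -(2 * y) := by simp [x, y, hx, map_ofNat]
  have hdy : d y = -(3 * x ^ 2 + algebraMap k A a) := by simp [x, y, hy, map_ofNat]
  exact ⟨fun D => Derivation.exists_eq_smul_of_isCoprime hgen hcop hdx hdy D
      (D.two_mul_smul_eq_of_sq_eq_cubic hrel),
    fun _ => Derivation.eq_zero_of_smul_eq_zero_of_isCoprime hcop hdx hdy⟩

/-- For `A = k[x,y]/(y² - x³ - ax - b)` with `4a³ + 27b² ≠ 0` over an
algebraically closed field of characteristic 0, the module `Der_k(A)` of `k`-derivations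
is free of rank 1 over `A`, generated by `∂ = -2y·∂/∂x - (3x²+a)·∂/∂y`: every derivation
is an `A`-multiple of `∂`, and `m∂ = 0` implies `m = 0`. -/
theorem derivations_free_rank_one (k : Type*) [Field k] [IsAlgClosed k] [CharZero k]
    (a b : k) (hΔ : 4 * a ^ 3 + 27 * b ^ 2 ≠ 0)
    (A : Type*) [CommRing A] [Algebra k A]
    (π : MvPolynomial (Fin 2) k →ₐ[k] A)
    (hπ : Function.Surjective π)
    (hker : RingHom.ker π.toRingHom =
      Ideal.span {(X 1 ^ 2 - X 0 ^ 3 - C a * X 0 - C b : MvPolynomial (Fin 2) k)})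
    (d : Derivation k A A)
    (hx : d (π (X 0)) = π (-2 * X 1))
    (hy : d (π (X 1)) = π (-(3 * X 0 ^ 2 + C a))) :
    (∀ D : Derivation k A A, ∃ m : A, D = m • d) ∧
    (∀ m : A, m • d = 0 → m = 0) :=
  derivations_free_rank_one_general k a b hΔ A π hπ hker d hx hy
end
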